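/- arXiv:2303.10072 — 6 statements merged into one kernel-verified Lean document; each statement's English description precedes it below -/
import Mathlib

section
/- Assume h > 0, n ≥ 1, and λ_0, …, λ_{n−1} are real numbers with λ_j ≠ 1/h and λ_j ≠ −1/h for all j, such that 0 < |e_λ(nh)| ≠ 1 and 0 < |e_{−λ}(nh)| ≠ 1. Define p(k) := λ(k+2), q(k) := Δ_h λ(k+1) − λ(k+1)λ(k+2), and r(k) := Δ²_h λ(k) − λ(k)·Δ_h λ(k+1) − λ(k)λ(k+1)λ(k+2). Then the third-order equation Δ³_h y(k) + p(k)Δ²_h y(k) + q(k)Δ_h y(k) + r(k)y(k) = 0 is Hyers–Ulam stable on ℕ with Hyers–Ulam stability constant K = K_0(λ)·(K_0(−λ))²: for every ε > 0 and every ξ : ℕ → ℝ satisfying |Δ³_h ξ(k) + p(k)Δ²_h ξ(k) + q(k)Δ_h ξ(k) + r(k)ξ(k)| ≤ ε for all k ∈ ℕ, there exists a solution y : ℕ → ℝ of the equation with |ξ(k) − y(k)| ≤ K_0(λ)·(K_0(−λ))²·ε for all k ∈ ℕ. -/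
/-- The forward `h`-difference operator on sequences. -/
noncomputable def hDiff (h : ℝ) (x : ℕ → ℝ) (k : ℕ) : ℝ := (x (k + 1) - x k) / h

/-- The discrete exponential over one period: `∏_{k=0}^{n-1} (1 + h c_k)`. -/
noncomputable def eExp (h : ℝ) (n : ℕ) (c : ℕ → ℝ) : ℝ :=
  ∏ k ∈ Finset.range n, (1 + h * c k)

/-- `S_k = Σ_{j=1}^{n} ∏_{i=0}^{j-1} 1/|1 + h c_{(k+i) mod n}|`. -/
noncomputable def Ssum (h : ℝ) (n : ℕ) (c : ℕ → ℝ) (k : ℕ) : ℝ :=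
  ∑ j ∈ Finset.range n, ∏ i ∈ Finset.range (j + 1), 1 / |1 + h * c ((k + i) % n)|

/-- The Hyers–Ulam constant `K₀ = (h|e|/|1-|e||) · max{S_0,…,S_{n-1}}`. -/
noncomputable def K0 (h : ℝ) (n : ℕ) (c : ℕ → ℝ) : ℝ :=
  (h * abs (eExp h n c) / abs (1 - abs (eExp h n c))) * ⨆ k : Fin n, Ssum h n c (k : ℕ)

/-- The `n`-cycle coefficient `λ(k) = c (k mod n)`. -/
def cyc (n : ℕ) (c : ℕ → ℝ) (k : ℕ) : ℝ := c (k % n)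


set_option maxHeartbeats 1000000


/-- window product of absolute values -/
noncomputable def Wa (a : ℕ → ℝ) (k m : ℕ) : ℝ := ∏ i ∈ Finset.range m, |a (k + i)|

lemma Wa_pos {a : ℕ → ℝ} (hne : ∀ k, a k ≠ 0) (k m : ℕ) : 0 < Wa a k m :=
  Finset.prod_pos fun i _ => abs_pos.mpr (hne _)

lemma Wa_add (a : ℕ → ℝ) (k m l : ℕ) : Wa a k (m + l) = Wa a k m * Wa a (k + m) l := by
  simp [Wa, Finset.prod_range_add, add_assoc]

lemma window_prod {n : ℕ} (b : ℕ → ℝ) (hper : ∀ k, b (k + n) = b k) (hne : ∀ k, b k ≠ 0)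
    (k : ℕ) : ∏ i ∈ Finset.range n, b (k + i) = ∏ i ∈ Finset.range n, b i := by
  induction k with
  | zero => simp
  | succ k ih =>
    have e1 : ∏ x ∈ Finset.range (n+1), b (k + x)
        = (∏ i ∈ Finset.range n, b (k+1+i)) * b k := by
      rw [Finset.prod_range_succ', add_zero]
      exact congrArg (· * b k)
        (Finset.prod_congr rfl fun i _ => by rw [show k+(i+1) = k+1+i by ring])
    have e2 : ∏ x ∈ Finset.range (n+1), b (k + x)
        = (∏ i ∈ Finset.range n, b (k+i)) * b (k+n) := Finset.prod_range_succ _ _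
    rw [hper] at e2
    have := mul_right_cancel₀ (hne k) (e1.symm.trans e2)
    rw [this, ih]

lemma per_shift {n : ℕ} {a : ℕ → ℝ} (hper : ∀ k, a (k + n) = a k) (q k : ℕ) :
    a (k + q * n) = a k := by
  induction q with
  | zero => simp
  | succ q ih => rw [show k + (q+1)*n = (k + q*n) + n by ring, hper, ih]

lemma Wa_full {n : ℕ} {a : ℕ → ℝ} (hper : ∀ k, a (k + n) = a k) (hne : ∀ k, a k ≠ 0)
    (k : ℕ) : Wa a k n = |∏ i ∈ Finset.range n, a i| := by
  rw [Wa, ← Finset.abs_prod]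
  exact congrArg abs (window_prod a hper hne k)

lemma Wa_shift {n : ℕ} {a : ℕ → ℝ} (hper : ∀ k, a (k + n) = a k) (k q m : ℕ) :
    Wa a (k + q * n) m = Wa a k m :=
  Finset.prod_congr rfl fun i _ => by
    rw [show k + q * n + i = (k + i) + q * n by ring, per_shift hper]

lemma Wa_decomp {n : ℕ} {a : ℕ → ℝ} (hper : ∀ k, a (k + n) = a k) (hne : ∀ k, a k ≠ 0)
    (k q s : ℕ) : Wa a k (q * n + s) = |∏ i ∈ Finset.range n, a i| ^ q * Wa a k s := by
  induction q with
  | zero => simp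
  | succ q ih =>
    have e : (q+1) * n + s = (q * n + s) + n := by ring
    rw [e, Wa_add, ih, Wa_full hper hne, pow_succ]
    ring

/-- fundamental solution -/
noncomputable def Pp (a : ℕ → ℝ) (k : ℕ) : ℝ := ∏ i ∈ Finset.range k, a i

lemma Pp_succ (a : ℕ → ℝ) (k : ℕ) : Pp a (k+1) = Pp a k * a k := Finset.prod_range_succ _ _

lemma Pp_ne {a : ℕ → ℝ} (hne : ∀ k, a k ≠ 0) (k : ℕ) : Pp a k ≠ 0 :=
  Finset.prod_ne_zero_iff.mpr fun i _ => hne i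

lemma Pp_abs_add {a : ℕ → ℝ} (k m : ℕ) : |Pp a (k + m)| = |Pp a k| * Wa a k m := by
  rw [Pp, Finset.prod_range_add, abs_mul]
  congr 1
  rw [Wa, Finset.abs_prod]

/-- variation of constants representation -/
lemma u_repr {a : ℕ → ℝ} (hne : ∀ k, a k ≠ 0) (u : ℕ → ℝ) (k : ℕ) :
    u k = Pp a k * (u 0 + ∑ j ∈ Finset.range k, (u (j+1) - a j * u j) / Pp a (j+1)) := by
  induction k with
  | zero => simp [Pp]
  | succ k ih =>
    rw [Finset.sum_range_succ, Pp_succ]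
    have hP : Pp a (k+1) ≠ 0 := Pp_ne hne (k+1)
    rw [Pp_succ] at hP
    have hX : Pp a k * a k * ((u (k+1) - a k * u k) / (Pp a k * a k)) = u (k+1) - a k * u k :=
      mul_div_cancel₀ _ hP
    linear_combination a k * ih - hX

/-- splitting a sum over range (Q*n) into blocks -/
lemma sum_grid (F : ℕ → ℝ) (Q n : ℕ) :
    ∑ i ∈ Finset.range (Q * n), F i
      = ∑ q ∈ Finset.range Q, ∑ s ∈ Finset.range n, F (q * n + s) := by
  induction Q with
  | zero => simp
  | succ Q ih =>
    rw [show (Q+1)*n = Q*n + n by ring, Finset.sum_range_add, ih, Finset.sum_range_succ]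

noncomputable def Tsum (a : ℕ → ℝ) (n k : ℕ) : ℝ := ∑ t ∈ Finset.range n, 1 / Wa a k (t+1)

lemma Tsum_nonneg {a : ℕ → ℝ} (hne : ∀ k, a k ≠ 0) (n k : ℕ) : 0 ≤ Tsum a n k :=
  Finset.sum_nonneg fun t _ => le_of_lt (one_div_pos.mpr (Wa_pos hne k (t+1)))

lemma geom_partial_le {x : ℝ} (h0 : 0 ≤ x) (h1 : x < 1) (Q : ℕ) :
    ∑ q ∈ Finset.range Q, x ^ q ≤ (1 - x)⁻¹ := by
  have := Summable.sum_le_tsum (Finset.range Q) (fun i _ => pow_nonneg h0 i)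
    (summable_geometric_of_lt_one h0 h1)
  rwa [tsum_geometric_of_lt_one h0 h1] at this

lemma Wa_front {n : ℕ} {a : ℕ → ℝ} (hn : 1 ≤ n) (hper : ∀ k, a (k + n) = a k)
    (hne : ∀ k, a k ≠ 0) (m l : ℕ) :
    Wa a m l * Wa a (m + l) (n - l % n) = |∏ i ∈ Finset.range n, a i| ^ (l / n + 1) := by
  rw [← Wa_add]
  have h1 : l + (n - l % n) = l / n * n + n := by
    have h2 : l / n * n + l % n = l := Nat.div_add_mod' l n
    have h3 : l % n < n := Nat.mod_lt _ hn
    omega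
  rw [h1, Wa_decomp hper hne, Wa_full hper hne, pow_succ]

lemma hu_hom (h : ℝ) (hh : 0 < h) (n : ℕ) (hn : 1 ≤ n) (a : ℕ → ℝ)
    (hper : ∀ k, a (k + n) = a k) (hne : ∀ k, a k ≠ 0)
    (hE1 : |∏ i ∈ Finset.range n, a i| ≠ 1)
    (δ : ℝ) (hδ : 0 ≤ δ) (u : ℕ → ℝ)
    (hu : ∀ k, |u (k+1) - a k * u k| ≤ h * δ) :
    ∃ y : ℕ → ℝ, (∀ k, y (k+1) = a k * y k) ∧
      ∀ k, |u k - y k| ≤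
        h * |∏ i ∈ Finset.range n, a i| / abs (1 - |∏ i ∈ Finset.range n, a i|) * Tsum a n k * δ := by
  set E : ℝ := ∏ i ∈ Finset.range n, a i with hE
  have hEne : E ≠ 0 := Finset.prod_ne_zero_iff.mpr fun i _ => hne i
  have hEb0 : 0 < |E| := abs_pos.mpr hEne
  rcases lt_or_gt_of_ne hE1 with hlt | hgt
  · -- |E| < 1
    refine ⟨fun k => u 0 * Pp a k, fun k => by
      show u 0 * Pp a (k+1) = a k * (u 0 * Pp a k); rw [Pp_succ]; ring, fun k => ?_⟩
    have hrep := u_repr hne u k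
    have e0 : u k - u 0 * Pp a k
        = ∑ j ∈ Finset.range k, Pp a k * ((u (j+1) - a j * u j) / Pp a (j+1)) := by
      rw [← Finset.mul_sum]; linear_combination hrep
    have perterm : ∀ j ∈ Finset.range k,
        |Pp a k * ((u (j+1) - a j * u j) / Pp a (j+1))| ≤ Wa a (j+1) (k-1-j) * (h*δ) := by
      intro j hj
      have hjk : j < k := Finset.mem_range.mp hj
      have hPk : Pp a k = Pp a ((j+1) + (k-1-j)) := by
        congr 1; omega
      have hPne : |Pp a (j+1)| ≠ 0 := abs_ne_zero.mpr (Pp_ne hne _)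
      rw [abs_mul, abs_div, hPk, Pp_abs_add]
      have hid : |Pp a (j+1)| * Wa a (j+1) (k-1-j) * (|u (j+1) - a j * u j| / |Pp a (j+1)|)
          = Wa a (j+1) (k-1-j) * |u (j+1) - a j * u j| := by
        field_simp
      rw [hid]
      exact mul_le_mul_of_nonneg_left (hu j) (Wa_pos hne _ _).le
    have e1 : ∑ j ∈ Finset.range k, Wa a (j+1) (k-1-j)
        = ∑ l ∈ Finset.range k, Wa a (k-l) l := by
      rw [← Finset.sum_range_reflect (fun l => Wa a (k - l) l) k]
      refine Finset.sum_congr rfl fun j hj => ?_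
      have hjk : j < k := Finset.mem_range.mp hj
      congr 1
      omega
    have e2 : ∀ l ∈ Finset.range k,
        Wa a (k-l) l = |E| ^ (l/n + 1) / Wa a k (n - l % n) := by
      intro l hl
      have hlk : l < k := Finset.mem_range.mp hl
      have hf := Wa_front hn hper hne (k-l) l
      have hkl : (k-l) + l = k := by omega
      rw [hkl] at hf
      rw [eq_div_iff (Wa_pos hne k (n - l % n)).ne']
      exact hf
    have e3 : ∑ s ∈ Finset.range n, (1 : ℝ) / Wa a k (n - s) = Tsum a n k := by
      rw [Tsum, ← Finset.sum_range_reflect (fun t => 1 / Wa a k (t+1)) n]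
      refine Finset.sum_congr rfl fun s hs => ?_
      have hsn : s < n := Finset.mem_range.mp hs
      congr 2
      omega
    have hFnn : ∀ l, 0 ≤ |E| ^ (l/n + 1) / Wa a k (n - l % n) := fun l =>
      div_nonneg (pow_nonneg (abs_nonneg _) _) (Wa_pos hne _ _).le
    calc |u k - u 0 * Pp a k|
        ≤ ∑ j ∈ Finset.range k, |Pp a k * ((u (j+1) - a j * u j) / Pp a (j+1))| := by
          rw [e0]; exact Finset.abs_sum_le_sum_abs _ _
      _ ≤ ∑ j ∈ Finset.range k, Wa a (j+1) (k-1-j) * (h*δ) := Finset.sum_le_sum perterm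
      _ = (∑ l ∈ Finset.range k, Wa a (k-l) l) * (h*δ) := by rw [← Finset.sum_mul, e1]
      _ = (∑ l ∈ Finset.range k, |E| ^ (l/n + 1) / Wa a k (n - l % n)) * (h*δ) := by
          rw [Finset.sum_congr rfl e2]
      _ ≤ (∑ l ∈ Finset.range (k*n), |E| ^ (l/n + 1) / Wa a k (n - l % n)) * (h*δ) := by
          refine mul_le_mul_of_nonneg_right ?_ (by positivity)
          refine Finset.sum_le_sum_of_subset_of_nonneg
            (Finset.range_subset_range.mpr (Nat.le_mul_of_pos_right k (by omega)))
            (fun i _ _ => hFnn i)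
      _ = ((∑ q ∈ Finset.range k, |E| ^ (q+1)) * Tsum a n k) * (h*δ) := by
          rw [sum_grid (fun l => |E| ^ (l/n + 1) / Wa a k (n - l % n)) k n]
          refine congrArg (· * (h*δ)) ?_
          calc ∑ q ∈ Finset.range k, ∑ s ∈ Finset.range n,
                |E| ^ ((q*n+s)/n + 1) / Wa a k (n - (q*n+s) % n)
              = ∑ q ∈ Finset.range k, |E| ^ (q+1)
                  * ∑ s ∈ Finset.range n, 1 / Wa a k (n - s) := by
                refine Finset.sum_congr rfl fun q _ => ?_
                rw [Finset.mul_sum]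
                refine Finset.sum_congr rfl fun s hs => ?_
                have hsn : s < n := Finset.mem_range.mp hs
                have hdiv : (q * n + s) / n = q := by
                  rw [add_comm, Nat.add_mul_div_right _ _ (by omega : 0 < n),
                    Nat.div_eq_of_lt hsn, zero_add]
                have hmod : (q * n + s) % n = s := by
                  rw [add_comm, Nat.add_mul_mod_self_right, Nat.mod_eq_of_lt hsn]
                rw [hdiv, hmod, div_eq_mul_one_div]
            _ = (∑ q ∈ Finset.range k, |E| ^ (q+1))
                  * ∑ s ∈ Finset.range n, 1 / Wa a k (n - s) := by
                rw [Finset.sum_mul]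
            _ = (∑ q ∈ Finset.range k, |E| ^ (q+1)) * Tsum a n k := by rw [e3]
      _ ≤ ((|E| * (1 - |E|)⁻¹) * Tsum a n k) * (h*δ) := by
          refine mul_le_mul_of_nonneg_right (mul_le_mul_of_nonneg_right ?_
            (Tsum_nonneg hne n k)) (by positivity)
          calc ∑ q ∈ Finset.range k, |E| ^ (q+1)
              = |E| * ∑ q ∈ Finset.range k, |E| ^ q := by
                rw [Finset.mul_sum]
                exact Finset.sum_congr rfl fun q _ => by rw [pow_succ]; ring
            _ ≤ |E| * (1 - |E|)⁻¹ :=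
                mul_le_mul_of_nonneg_left (geom_partial_le (abs_nonneg _) hlt k) (abs_nonneg _)
      _ = h * |E| / abs (1 - |E|) * Tsum a n k * δ := by
          rw [abs_of_pos (by linarith : (0:ℝ) < 1 - |E|)]
          field_simp
  · -- 1 < |E|
    set x : ℝ := |E|⁻¹ with hx
    have hx0 : 0 ≤ x := inv_nonneg.mpr (abs_nonneg _)
    have hx1 : x < 1 := by
      rw [hx]
      rw [inv_lt_one_iff₀]
      right; exact hgt
    set m₀ : ℝ := ∏ i ∈ Finset.range n, min 1 |a i| with hm₀def
    have hm₀ : 0 < m₀ := Finset.prod_pos fun i _ => lt_min one_pos (abs_pos.mpr (hne i))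
    have hlow : ∀ k s, s ≤ n → m₀ ≤ Wa a k s := by
      intro k s hs
      have hwin : m₀ = ∏ i ∈ Finset.range n, min 1 |a (k + i)| :=
        (window_prod (fun j => min 1 |a j|)
          (fun j => by simp [hper j]) (fun j => (lt_min one_pos (abs_pos.mpr (hne j))).ne') k).symm
      have hsplit : ∏ i ∈ Finset.range n, min 1 |a (k + i)|
          = (∏ i ∈ Finset.range s, min 1 |a (k + i)|)
            * ∏ i ∈ Finset.range (n - s), min 1 |a (k + (s + i))| := by
        rw [← Finset.prod_range_add (fun i => min 1 |a (k + i)|) s (n - s), Nat.add_sub_cancel' hs]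
      have h2 : (∏ i ∈ Finset.range (n - s), min 1 |a (k + (s + i))|) ≤ 1 :=
        Finset.prod_le_one (fun i _ => le_min zero_le_one (abs_nonneg _) |>.trans' (by positivity))
          (fun i _ => min_le_left _ _)
      have h1nn : 0 ≤ ∏ i ∈ Finset.range s, min 1 |a (k + i)| :=
        Finset.prod_nonneg fun i _ => le_min zero_le_one (abs_nonneg _) |>.trans' (by positivity)
      have h3 : m₀ ≤ ∏ i ∈ Finset.range s, min 1 |a (k + i)| := by
        rw [hwin, hsplit]
        calc (∏ i ∈ Finset.range s, min 1 |a (k + i)|)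
              * ∏ i ∈ Finset.range (n - s), min 1 |a (k + (s + i))|
            ≤ (∏ i ∈ Finset.range s, min 1 |a (k + i)|) * 1 :=
              mul_le_mul_of_nonneg_left h2 h1nn
          _ = ∏ i ∈ Finset.range s, min 1 |a (k + i)| := mul_one _
      refine h3.trans (Finset.prod_le_prod (fun i _ => ?_) (fun i _ => min_le_right _ _))
      positivity
    set g : ℕ → ℝ := fun j => u (j+1) - a j * u j with hg
    set f : ℕ → ℝ := fun j => g j / Pp a (j+1) with hf
    have habs_f : ∀ j, |f j| ≤ (h*δ) / Wa a 0 (j+1) := by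
      intro j
      have : |Pp a (j+1)| = Wa a 0 (j+1) := by
        have := Pp_abs_add (a := a) 0 (j+1)
        simpa [Pp] using this
      rw [hf, abs_div, this]
      exact div_le_div_of_nonneg_right (hu j) (Wa_pos hne _ _).le
    have hWa0 : ∀ j : ℕ, (h*δ) / Wa a 0 (j+1) ≤ (h*δ/m₀) * x ^ (j/n) := by
      intro j
      have hdec : Wa a 0 (j+1) = |E| ^ ((j+1)/n) * Wa a 0 ((j+1)%n) := by
        conv_lhs => rw [show j+1 = (j+1)/n * n + (j+1)%n from (Nat.div_add_mod' (j+1) n).symm]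
        exact Wa_decomp hper hne 0 _ _
      have hq : (h*δ) / Wa a 0 (j+1) ≤ (h*δ) / (|E| ^ ((j+1)/n) * m₀) := by
        rw [hdec]
        refine div_le_div_of_nonneg_left (by positivity) (by positivity) ?_
        exact mul_le_mul_of_nonneg_left (hlow 0 _ (Nat.mod_lt _ (by omega)).le) (by positivity)
      refine hq.trans ?_
      have : (h*δ) / (|E| ^ ((j+1)/n) * m₀) = (h*δ/m₀) * x ^ ((j+1)/n) := by
        have h1 : (|E|:ℝ) ^ ((j+1)/n) ≠ 0 := pow_ne_zero _ hEb0.ne'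
        rw [hx, inv_pow]
        field_simp
      rw [this]
      exact mul_le_mul_of_nonneg_left
        (pow_le_pow_of_le_one hx0 hx1.le (Nat.div_le_div_right (Nat.le_succ j))) (by positivity)
    have hsumG : Summable (fun j => (h*δ/m₀) * x ^ (j/n)) := by
      refine summable_of_sum_range_le (c := (h*δ/m₀) * ((n:ℝ) * (1-x)⁻¹))
        (fun j => by positivity) (fun m => ?_)
      calc ∑ j ∈ Finset.range m, (h*δ/m₀) * x ^ (j/n)
          ≤ ∑ j ∈ Finset.range (m*n), (h*δ/m₀) * x ^ (j/n) :=
            Finset.sum_le_sum_of_subset_of_nonneg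
              (Finset.range_subset_range.mpr (Nat.le_mul_of_pos_right m (by omega)))
              (fun i _ _ => by positivity)
        _ = ∑ q ∈ Finset.range m, ∑ s ∈ Finset.range n, (h*δ/m₀) * x ^ ((q*n+s)/n) :=
            sum_grid _ m n
        _ = ∑ q ∈ Finset.range m, (n:ℝ) * ((h*δ/m₀) * x ^ q) := by
            refine Finset.sum_congr rfl fun q _ => ?_
            rw [Finset.sum_congr rfl (fun s hs => ?_), Finset.sum_const, Finset.card_range,
              nsmul_eq_mul]
            have hsn : s < n := Finset.mem_range.mp hs
            have hdiv : (q * n + s) / n = q := by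
              rw [add_comm, Nat.add_mul_div_right _ _ (by omega : 0 < n),
                Nat.div_eq_of_lt hsn, zero_add]
            rw [hdiv]
        _ = (h*δ/m₀) * ((n:ℝ) * ∑ q ∈ Finset.range m, x ^ q) := by
            rw [Finset.mul_sum, Finset.mul_sum]
            exact Finset.sum_congr rfl fun q _ => by ring
        _ ≤ (h*δ/m₀) * ((n:ℝ) * (1-x)⁻¹) := by
            refine mul_le_mul_of_nonneg_left (mul_le_mul_of_nonneg_left ?_ (by positivity))
              (by positivity)
            exact geom_partial_le hx0 hx1 m
    have hf_sum : Summable f :=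
      Summable.of_abs (Summable.of_nonneg_of_le (fun j => abs_nonneg _)
        (fun j => (habs_f j).trans (hWa0 j)) hsumG)
    refine ⟨fun k => (u 0 + ∑' j, f j) * Pp a k, fun k => by
      show (u 0 + ∑' j, f j) * Pp a (k+1) = a k * ((u 0 + ∑' j, f j) * Pp a k)
      rw [Pp_succ]; ring, fun k => ?_⟩
    have htail := hf_sum.sum_add_tsum_nat_add k
    have e0 : u k - (u 0 + ∑' j, f j) * Pp a k = -(Pp a k * ∑' i, f (i+k)) := by
      have hrep : u k = Pp a k * (u 0 + ∑ j ∈ Finset.range k, f j) := u_repr hne u k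
      linear_combination hrep + Pp a k * htail
    rw [e0, abs_neg, abs_mul]
    have hsumshift : Summable (fun i => |f (i+k)|) := (summable_nat_add_iff k).mpr hf_sum.abs
    have habs_tsum : |∑' i, f (i+k)| ≤ ∑' i, |f (i+k)| := by
      simpa [Real.norm_eq_abs] using norm_tsum_le_tsum_norm (f := fun i => f (i+k))
        (by simpa [Real.norm_eq_abs] using hsumshift)
    have hPkne : |Pp a k| ≠ 0 := abs_ne_zero.mpr (Pp_ne hne _)
    have hPkpos : 0 < |Pp a k| := abs_pos.mpr (Pp_ne hne _)
    have htail_bound : ∑' i, |f (i+k)| ≤ (1-x)⁻¹ * Tsum a n k * (h*δ) / |Pp a k| := by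
      refine Real.tsum_le_of_sum_range_le (fun i => abs_nonneg _) (fun m => ?_)
      have hterm : ∀ i : ℕ, |f (i+k)| ≤ (h*δ/|Pp a k|) * (1/Wa a k (i+1)) := by
        intro i
        have hPadd : |Pp a (i+k+1)| = |Pp a k| * Wa a k (i+1) := by
          rw [show i+k+1 = k + (i+1) by omega, Pp_abs_add]
        have : |f (i+k)| = |g (i+k)| / (|Pp a k| * Wa a k (i+1)) := by
          rw [hf, abs_div, hPadd]
        rw [this]
        calc |g (i+k)| / (|Pp a k| * Wa a k (i+1))
            ≤ (h*δ) / (|Pp a k| * Wa a k (i+1)) :=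
              div_le_div_of_nonneg_right (hu (i+k))
                (mul_nonneg (abs_nonneg _) (Wa_pos hne _ _).le)
          _ = (h*δ/|Pp a k|) * (1/Wa a k (i+1)) := by
              field_simp
      calc ∑ i ∈ Finset.range m, |f (i+k)|
          ≤ ∑ i ∈ Finset.range m, (h*δ/|Pp a k|) * (1/Wa a k (i+1)) :=
            Finset.sum_le_sum fun i _ => hterm i
        _ = (h*δ/|Pp a k|) * ∑ i ∈ Finset.range m, 1/Wa a k (i+1) := by
            rw [Finset.mul_sum]
        _ ≤ (h*δ/|Pp a k|) * ((1-x)⁻¹ * Tsum a n k) := by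
            refine mul_le_mul_of_nonneg_left ?_ (by positivity)
            calc ∑ i ∈ Finset.range m, 1/Wa a k (i+1)
                ≤ ∑ i ∈ Finset.range (m*n), 1/Wa a k (i+1) :=
                  Finset.sum_le_sum_of_subset_of_nonneg
                    (Finset.range_subset_range.mpr (Nat.le_mul_of_pos_right m (by omega)))
                    (fun i _ _ => (one_div_pos.mpr (Wa_pos hne _ _)).le)
              _ = ∑ q ∈ Finset.range m, ∑ s ∈ Finset.range n, 1/Wa a k (q*n+s+1) :=
                  sum_grid _ m n
              _ = ∑ q ∈ Finset.range m, x^q * Tsum a n k := by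
                  refine Finset.sum_congr rfl fun q _ => ?_
                  rw [Tsum, Finset.mul_sum]
                  refine Finset.sum_congr rfl fun s hs => ?_
                  have : q*n+s+1 = q*n + (s+1) := by omega
                  rw [this, Wa_decomp hper hne, hx, inv_pow]
                  rw [one_div, one_div, mul_inv]
                _ = (∑ q ∈ Finset.range m, x^q) * Tsum a n k := by rw [Finset.sum_mul]
                _ ≤ (1-x)⁻¹ * Tsum a n k :=
                  mul_le_mul_of_nonneg_right (geom_partial_le hx0 hx1 m) (Tsum_nonneg hne n k)
        _ = (1-x)⁻¹ * Tsum a n k * (h*δ) / |Pp a k| := by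
            field_simp
    calc |Pp a k| * |∑' i, f (i+k)|
        ≤ |Pp a k| * ((1-x)⁻¹ * Tsum a n k * (h*δ) / |Pp a k|) :=
          mul_le_mul_of_nonneg_left (habs_tsum.trans htail_bound) (abs_nonneg _)
      _ = (1-x)⁻¹ * Tsum a n k * (h*δ) := by
          rw [mul_comm, div_mul_cancel₀ _ hPkne]
      _ = h * |E| / abs (1 - |E|) * Tsum a n k * δ := by
          rw [abs_of_neg (by linarith : 1 - |E| < 0), hx]
          have hEm1 : |E| - 1 ≠ 0 := by
            intro hcon
            rw [sub_eq_zero] at hcon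
            exact hE1 hcon
          field_simp
          ring

noncomputable def zsol (a f : ℕ → ℝ) (h : ℝ) : ℕ → ℝ
  | 0 => 0
  | (k+1) => a k * zsol a f h k + h * f k

lemma hu_inhom (h : ℝ) (hh : 0 < h) (n : ℕ) (hn : 1 ≤ n) (a : ℕ → ℝ)
    (hper : ∀ k, a (k + n) = a k) (hne : ∀ k, a k ≠ 0)
    (hE1 : |∏ i ∈ Finset.range n, a i| ≠ 1)
    (δ : ℝ) (hδ : 0 ≤ δ) (F : ℕ → ℝ) (u : ℕ → ℝ)
    (hu : ∀ k, |u (k+1) - a k * u k - h * F k| ≤ h * δ) :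
    ∃ y : ℕ → ℝ, (∀ k, y (k+1) = a k * y k + h * F k) ∧
      ∀ k, |u k - y k| ≤
        h * |∏ i ∈ Finset.range n, a i| / abs (1 - |∏ i ∈ Finset.range n, a i|) * Tsum a n k * δ := by
  obtain ⟨y', hy'hom, hy'b⟩ := hu_hom h hh n hn a hper hne hE1 δ hδ
    (fun k => u k - zsol a F h k)
    (fun k => by
      have : u (k+1) - zsol a F h (k+1) - a k * (u k - zsol a F h k)
          = u (k+1) - a k * u k - h * F k := by
        rw [show zsol a F h (k+1) = a k * zsol a F h k + h * F k from rfl]; ring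
      rw [this]; exact hu k)
  refine ⟨fun k => y' k + zsol a F h k, fun k => ?_, fun k => ?_⟩
  · show y' (k+1) + zsol a F h (k+1) = a k * (y' k + zsol a F h k) + h * F k
    rw [show zsol a F h (k+1) = a k * zsol a F h k + h * F k from rfl, hy'hom k]
    ring
  · show |u k - (y' k + zsol a F h k)| ≤ _
    have he : u k - (y' k + zsol a F h k) = (u k - zsol a F h k) - y' k := by ring
    rw [he]
    exact hy'b k

/-- factorization identity -/
lemma factor_id (h : ℝ) (hh : h ≠ 0) (l w u3 u2 : ℕ → ℝ)
    (h3 : ∀ k, u3 k = hDiff h w k + l k * w k)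
    (h2 : ∀ k, u2 k = hDiff h u3 k - l (k+1) * u3 k) (k : ℕ) :
    hDiff h u2 k + l (k+2) * u2 k
      = hDiff h (hDiff h (hDiff h w)) k
        + l (k+2) * hDiff h (hDiff h w) k
        + (hDiff h l (k+1) - l (k+1) * l (k+2)) * hDiff h w k
        + (hDiff h (hDiff h l) k - l k * hDiff h l (k+1) - l k * l (k+1) * l (k+2)) * w k := by
  simp only [hDiff, h3, h2]
  field_simp
  ring

lemma Tsum_eq_prod (a : ℕ → ℝ) (n k : ℕ) :
    Tsum a n k = ∑ t ∈ Finset.range n, ∏ i ∈ Finset.range (t+1), 1/|a (k+i)| := by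
  unfold Tsum Wa
  refine Finset.sum_congr rfl fun t _ => ?_
  rw [one_div, ← Finset.prod_inv_distrib]
  exact Finset.prod_congr rfl fun i _ => (one_div _).symm

lemma convp (h : ℝ) (hh : h ≠ 0) (w : ℕ → ℝ) (μ A : ℝ) (k : ℕ) :
    w (k+1) - (1 - h*μ) * w k - h * A = h * (hDiff h w k + μ * w k - A) := by
  simp only [hDiff]; field_simp; ring

lemma convm (h : ℝ) (hh : h ≠ 0) (w : ℕ → ℝ) (μ A : ℝ) (k : ℕ) :
    w (k+1) - (1 + h*μ) * w k - h * A = h * (hDiff h w k - μ * w k - A) := by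
  simp only [hDiff]; field_simp; ring

lemma convp0 (h : ℝ) (hh : h ≠ 0) (w : ℕ → ℝ) (μ : ℝ) (k : ℕ) :
    w (k+1) - (1 - h*μ) * w k = h * (hDiff h w k + μ * w k) := by
  simp only [hDiff]; field_simp; ring

lemma solvp (h : ℝ) (hh : h ≠ 0) (w : ℕ → ℝ) (μ A : ℝ) (k : ℕ)
    (hrec : w (k+1) = (1 - h*μ) * w k + h * A) : hDiff h w k + μ * w k = A := by
  simp only [hDiff]; rw [hrec]; field_simp; ring

lemma solvm (h : ℝ) (hh : h ≠ 0) (w : ℕ → ℝ) (μ A : ℝ) (k : ℕ)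
    (hrec : w (k+1) = (1 + h*μ) * w k + h * A) : hDiff h w k - μ * w k = A := by
  simp only [hDiff]; rw [hrec]; field_simp; ring

noncomputable def A1 (h : ℝ) (n : ℕ) (c : ℕ → ℝ) : ℕ → ℝ := fun k => 1 - h * cyc n c (k+2)
noncomputable def A2 (h : ℝ) (n : ℕ) (c : ℕ → ℝ) : ℕ → ℝ := fun k => 1 + h * cyc n c (k+1)
noncomputable def A3 (h : ℝ) (n : ℕ) (c : ℕ → ℝ) : ℕ → ℝ := fun k => 1 - h * cyc n c k

noncomputable def U3 (h : ℝ) (n : ℕ) (c : ℕ → ℝ) (ξ : ℕ → ℝ) : ℕ → ℝ :=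
  fun k => hDiff h ξ k + cyc n c k * ξ k
noncomputable def U2 (h : ℝ) (n : ℕ) (c : ℕ → ℝ) (ξ : ℕ → ℝ) : ℕ → ℝ :=
  fun k => hDiff h (U3 h n c ξ) k - cyc n c (k+1) * (U3 h n c ξ) k

theorem stmt_7 (h : ℝ) (hh : 0 < h) (n : ℕ) (hn : 1 ≤ n) (c : ℕ → ℝ)
    (hc : ∀ j, j < n → c j ≠ 1 / h ∧ c j ≠ -1 / h)
    (he0 : 0 < |eExp h n c|) (he1 : |eExp h n c| ≠ 1)
    (hne0 : 0 < |eExp h n (fun j => -c j)|) (hne1 : |eExp h n (fun j => -c j)| ≠ 1)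
    (p q r : ℕ → ℝ)
    (hp : ∀ k, p k = cyc n c (k + 2))
    (hq : ∀ k, q k = hDiff h (cyc n c) (k + 1) - cyc n c (k + 1) * cyc n c (k + 2))
    (hr : ∀ k, r k = hDiff h (hDiff h (cyc n c)) k - cyc n c k * hDiff h (cyc n c) (k + 1)
      - cyc n c k * cyc n c (k + 1) * cyc n c (k + 2)) :
    ∀ ε : ℝ, 0 < ε → ∀ ξ : ℕ → ℝ,
      (∀ k, |hDiff h (hDiff h (hDiff h ξ)) k + p k * hDiff h (hDiff h ξ) k
        + q k * hDiff h ξ k + r k * ξ k| ≤ ε) →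
      ∃ y : ℕ → ℝ,
        (∀ k, hDiff h (hDiff h (hDiff h y)) k + p k * hDiff h (hDiff h y) k
          + q k * hDiff h y k + r k * y k = 0) ∧
        ∀ k, |ξ k - y k| ≤ K0 h n c * (K0 h n (fun j => -c j)) ^ 2 * ε := by
  have npos : 0 < n := hn
  have hcycper : ∀ k, cyc n c (k + n) = cyc n c k := fun k => by
    simp [cyc, Nat.add_mod_right]
  have hzm : ∀ k, (1 : ℝ) - h * cyc n c k ≠ 0 := by
    intro k h0
    refine (hc (k % n) (Nat.mod_lt _ npos)).1 ?_
    simp only [cyc] at h0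
    field_simp
    linear_combination -h0
  have hzp : ∀ k, (1 : ℝ) + h * cyc n c k ≠ 0 := by
    intro k h0
    refine (hc (k % n) (Nat.mod_lt _ npos)).2 ?_
    simp only [cyc] at h0
    field_simp
    linear_combination h0
  -- periodicity of coefficient sequences
  have hper1 : ∀ k, A1 h n c (k + n) = A1 h n c k := fun k => by
    simp only [A1]; rw [show k + n + 2 = (k + 2) + n by ring, hcycper]
  have hper2 : ∀ k, A2 h n c (k + n) = A2 h n c k := fun k => by
    simp only [A2]; rw [show k + n + 1 = (k + 1) + n by ring, hcycper]
  have hper3 : ∀ k, A3 h n c (k + n) = A3 h n c k := fun k => by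
    simp only [A3]; rw [hcycper]
  have hz1 : ∀ k, A1 h n c k ≠ 0 := fun k => hzm _
  have hz2 : ∀ k, A2 h n c k ≠ 0 := fun k => hzp _
  have hz3 : ∀ k, A3 h n c k ≠ 0 := fun k => hzm _
  -- products over one period
  have hbmE : ∏ i ∈ Finset.range n, A3 h n c i = eExp h n (fun j => -c j) := by
    refine Finset.prod_congr rfl fun i hi => ?_
    have hin : i % n = i := Nat.mod_eq_of_lt (Finset.mem_range.mp hi)
    simp only [A3, cyc, hin, eExp]
    ring
  have hE1eq : ∏ i ∈ Finset.range n, A1 h n c i = eExp h n (fun j => -c j) := by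
    rw [← hbmE, ← window_prod (A3 h n c) hper3 hz3 2]
    refine Finset.prod_congr rfl fun i _ => ?_
    simp only [A1, A3]
    rw [Nat.add_comm 2 i]
  have hE2eq : ∏ i ∈ Finset.range n, A2 h n c i = eExp h n c := by
    rw [show eExp h n c = ∏ i ∈ Finset.range n, (1 + h * cyc n c i) from
      Finset.prod_congr rfl fun i hi => by
        simp [cyc, Nat.mod_eq_of_lt (Finset.mem_range.mp hi), eExp]]
    rw [← window_prod (fun k => 1 + h * cyc n c k) (fun k => by show 1 + h * cyc n c (k+n) = 1 + h * cyc n c k; rw [hcycper]) hzp 1]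
    refine Finset.prod_congr rfl fun i _ => ?_
    simp only [A2]
    rw [Nat.add_comm 1 i]
  have hE3eq : ∏ i ∈ Finset.range n, A3 h n c i = eExp h n (fun j => -c j) := hbmE
  -- Tsum vs Ssum
  have hT1 : ∀ k, Tsum (A1 h n c) n k = Ssum h n (fun j => -c j) ((k + 2) % n) := by
    intro k
    rw [Tsum_eq_prod, Ssum]
    refine Finset.sum_congr rfl fun t _ => Finset.prod_congr rfl fun i _ => ?_
    rw [Nat.mod_add_mod]
    simp only [A1, cyc]
    rw [show k + 2 + i = k + i + 2 by ring]
    congr 1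
    rw [abs_sub_comm, ← abs_neg]
    congr 1
    ring
  have hT2 : ∀ k, Tsum (A2 h n c) n k = Ssum h n c ((k + 1) % n) := by
    intro k
    rw [Tsum_eq_prod, Ssum]
    refine Finset.sum_congr rfl fun t _ => Finset.prod_congr rfl fun i _ => ?_
    rw [Nat.mod_add_mod]
    simp only [A2, cyc]
    rw [show k + 1 + i = k + i + 1 by ring]
  have hT3 : ∀ k, Tsum (A3 h n c) n k = Ssum h n (fun j => -c j) (k % n) := by
    intro k
    rw [Tsum_eq_prod, Ssum]
    refine Finset.sum_congr rfl fun t _ => Finset.prod_congr rfl fun i _ => ?_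
    rw [Nat.mod_add_mod]
    simp only [A3, cyc]
    congr 1
    rw [abs_sub_comm, ← abs_neg]
    congr 1
    ring
  -- sup bounds
  have hsup : ∀ (c' : ℕ → ℝ) (m : ℕ), m < n →
      Ssum h n c' m ≤ ⨆ k : Fin n, Ssum h n c' (k : ℕ) := by
    intro c' m hm
    exact le_ciSup (f := fun k : Fin n => Ssum h n c' (k : ℕ))
      (Set.Finite.bddAbove (Set.finite_range _)) ⟨m, hm⟩
  have hSnn : ∀ (c' : ℕ → ℝ) (m : ℕ), 0 ≤ Ssum h n c' m := by
    intro c' m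
    refine Finset.sum_nonneg fun j _ => Finset.prod_nonneg fun i _ => ?_
    positivity
  have hK0nn : ∀ c' : ℕ → ℝ, 0 ≤ K0 h n c' := fun c' =>
    mul_nonneg (div_nonneg (mul_nonneg hh.le (abs_nonneg _)) (abs_nonneg _))
      ((hSnn c' 0).trans (hsup c' 0 npos))
  have hpre : ∀ e : ℝ, 0 ≤ h * |e| / abs (1 - |e|) := fun e =>
    div_nonneg (mul_nonneg hh.le (abs_nonneg _)) (abs_nonneg _)
  have hbound1 : ∀ k, h * |∏ i ∈ Finset.range n, A1 h n c i|
      / abs (1 - |∏ i ∈ Finset.range n, A1 h n c i|) * Tsum (A1 h n c) n k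
        ≤ K0 h n (fun j => -c j) := by
    intro k
    rw [hE1eq, hT1 k, K0]
    exact mul_le_mul_of_nonneg_left (hsup _ _ (Nat.mod_lt _ npos)) (hpre _)
  have hbound2 : ∀ k, h * |∏ i ∈ Finset.range n, A2 h n c i|
      / abs (1 - |∏ i ∈ Finset.range n, A2 h n c i|) * Tsum (A2 h n c) n k ≤ K0 h n c := by
    intro k
    rw [hE2eq, hT2 k, K0]
    exact mul_le_mul_of_nonneg_left (hsup _ _ (Nat.mod_lt _ npos)) (hpre _)
  have hbound3 : ∀ k, h * |∏ i ∈ Finset.range n, A3 h n c i|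
      / abs (1 - |∏ i ∈ Finset.range n, A3 h n c i|) * Tsum (A3 h n c) n k
        ≤ K0 h n (fun j => -c j) := by
    intro k
    rw [hE3eq, hT3 k, K0]
    exact mul_le_mul_of_nonneg_left (hsup _ _ (Nat.mod_lt _ npos)) (hpre _)
  -- main chain
  intro ε hε ξ hξ
  have hfac := factor_id h hh.ne' (cyc n c) ξ (U3 h n c ξ) (U2 h n c ξ)
    (fun _ => rfl) (fun _ => rfl)
  have hstep1 : ∀ k, |U2 h n c ξ (k+1) - A1 h n c k * U2 h n c ξ k| ≤ h * ε := by
    intro k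
    have hval : U2 h n c ξ (k+1) - A1 h n c k * U2 h n c ξ k
        = h * (hDiff h (U2 h n c ξ) k + cyc n c (k+2) * U2 h n c ξ k) := by
      rw [show A1 h n c k = 1 - h * cyc n c (k+2) from rfl]
      exact convp0 h hh.ne' _ _ k
    rw [hval, abs_mul, abs_of_pos hh]
    refine mul_le_mul_of_nonneg_left ?_ hh.le
    rw [hfac k]
    have := hξ k
    rw [hp k, hq k, hr k] at this
    exact this
  obtain ⟨v1, hv1hom, hv1b⟩ := hu_hom h hh n hn (A1 h n c) hper1 hz1
    (by rw [hE1eq]; exact hne1) ε hε.le (U2 h n c ξ) hstep1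
  have hv1K : ∀ k, |U2 h n c ξ k - v1 k| ≤ K0 h n (fun j => -c j) * ε := fun k =>
    (hv1b k).trans (mul_le_mul_of_nonneg_right (hbound1 k) hε.le)
  have hδ1nn : 0 ≤ K0 h n (fun j => -c j) * ε := mul_nonneg (hK0nn _) hε.le
  have hstep2 : ∀ k, |U3 h n c ξ (k+1) - A2 h n c k * U3 h n c ξ k - h * v1 k|
      ≤ h * (K0 h n (fun j => -c j) * ε) := by
    intro k
    have hval : U3 h n c ξ (k+1) - A2 h n c k * U3 h n c ξ k - h * v1 k
        = h * (U2 h n c ξ k - v1 k) := by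
      rw [show A2 h n c k = 1 + h * cyc n c (k+1) from rfl,
        show U2 h n c ξ k = hDiff h (U3 h n c ξ) k - cyc n c (k+1) * U3 h n c ξ k from rfl]
      exact convm h hh.ne' _ _ _ k
    rw [hval, abs_mul, abs_of_pos hh]
    exact mul_le_mul_of_nonneg_left (hv1K k) hh.le
  obtain ⟨v2, hv2rec, hv2b⟩ := hu_inhom h hh n hn (A2 h n c) hper2 hz2
    (by rw [hE2eq]; exact he1) _ hδ1nn v1 (U3 h n c ξ) hstep2
  have hv2K : ∀ k, |U3 h n c ξ k - v2 k| ≤ K0 h n c * (K0 h n (fun j => -c j) * ε) :=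
    fun k => (hv2b k).trans (mul_le_mul_of_nonneg_right (hbound2 k) hδ1nn)
  have hδ2nn : 0 ≤ K0 h n c * (K0 h n (fun j => -c j) * ε) := mul_nonneg (hK0nn _) hδ1nn
  have hstep3 : ∀ k, |ξ (k+1) - A3 h n c k * ξ k - h * v2 k|
      ≤ h * (K0 h n c * (K0 h n (fun j => -c j) * ε)) := by
    intro k
    have hval : ξ (k+1) - A3 h n c k * ξ k - h * v2 k = h * (U3 h n c ξ k - v2 k) := by
      rw [show A3 h n c k = 1 - h * cyc n c k from rfl,
        show U3 h n c ξ k = hDiff h ξ k + cyc n c k * ξ k from rfl]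
      have := convp h hh.ne' ξ (cyc n c k) (v2 k) k
      linarith [this]
    rw [hval, abs_mul, abs_of_pos hh]
    exact mul_le_mul_of_nonneg_left (hv2K k) hh.le
  obtain ⟨y, hyrec, hyb⟩ := hu_inhom h hh n hn (A3 h n c) hper3 hz3
    (by rw [hE3eq]; exact hne1) _ hδ2nn v2 ξ hstep3
  refine ⟨y, ?_, ?_⟩
  · -- y is a solution
    intro k
    have hw3 : ∀ m, U3 h n c y m = v2 m := by
      intro m
      refine solvp h hh.ne' y (cyc n c m) (v2 m) m ?_
      rw [hyrec m]
      rfl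
    have hw2 : ∀ m, U2 h n c y m = v1 m := by
      intro m
      refine solvm h hh.ne' (U3 h n c y) (cyc n c (m+1)) (v1 m) m ?_
      rw [hw3 (m+1), hw3 m, hv2rec m]
      rfl
    have hzero : hDiff h (U2 h n c y) k + cyc n c (k+2) * U2 h n c y k = 0 := by
      have : hDiff h (U2 h n c y) k + cyc n c (k+2) * U2 h n c y k
          = hDiff h v1 k + cyc n c (k+2) * v1 k := by
        simp only [hDiff]
        rw [hw2 (k+1), hw2 k]
      rw [this]
      have hrec : v1 (k+1) = (1 - h * cyc n c (k+2)) * v1 k + h * 0 := by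
        rw [hv1hom k, mul_zero, add_zero]
        rfl
      rw [solvp h hh.ne' v1 (cyc n c (k+2)) 0 k hrec]
    rw [hp k, hq k, hr k,
      ← factor_id h hh.ne' (cyc n c) y (U3 h n c y) (U2 h n c y) (fun _ => rfl) (fun _ => rfl) k]
    exact hzero
  · intro k
    calc |ξ k - y k|
        ≤ h * |∏ i ∈ Finset.range n, A3 h n c i|
            / abs (1 - |∏ i ∈ Finset.range n, A3 h n c i|)
            * Tsum (A3 h n c) n k * (K0 h n c * (K0 h n (fun j => -c j) * ε)) := hyb k
      _ ≤ K0 h n (fun j => -c j) * (K0 h n c * (K0 h n (fun j => -c j) * ε)) :=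
          mul_le_mul_of_nonneg_right (hbound3 k) hδ2nn
      _ = K0 h n c * (K0 h n (fun j => -c j)) ^ 2 * ε := by ring
end

section
/- Assume h > 0, n ≥ 1, and λ_0, …, λ_{n−1} are real numbers with λ_j ≠ 1/h and λ_j ≠ −1/h for all j, such that 0 < |e_λ(nh)| ≠ 1 and 0 < |e_{−λ}(nh)| ≠ 1. Define p(k) := −λ(k+2), q(k) := Δ_h λ(k+1) − λ(k+1)λ(k+2), and r(k) := Δ²_h λ(k) − λ(k+1)·Δ_h λ(k+1) − (λ(k+1) + λ(k+2))·Δ_h λ(k) + λ(k)λ(k+1)λ(k+2). Then the third-order equation Δ³_h y(k) + p(k)Δ²_h y(k) + q(k)Δ_h y(k) + r(k)y(k) = 0 is Hyers–Ulam stable on ℕ with Hyers–Ulam stability constant K = (K_0(λ))²·K_0(−λ): for every ε > 0 and every ξ : ℕ → ℝ satisfying |Δ³_h ξ(k) + p(k)Δ²_h ξ(k) + q(k)Δ_h ξ(k) + r(k)ξ(k)| ≤ ε for all k ∈ ℕ, there exists a solution y : ℕ → ℝ of the equation with |ξ(k) − y(k)| ≤ (K_0(λ))²·K_0(−λ)·ε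 for all k ∈ ℕ. -/
/-! ### Auxiliary lemmas -/

lemma HU_rot1 (n : ℕ) (g : ℕ → ℝ) :
    ∏ j ∈ Finset.range n, g ((j + 1) % n) = ∏ j ∈ Finset.range n, g (j % n) := by
  cases n with
  | zero => simp
  | succ N =>
    have L : ∏ j ∈ Finset.range (N + 1), g ((j + 1) % (N + 1))
        = (∏ j ∈ Finset.range N, g ((j + 1) % (N + 1))) * g 0 := by
      rw [Finset.prod_range_succ, Nat.mod_self]
    have R : ∏ j ∈ Finset.range (N + 1), g (j % (N + 1))
        = (∏ j ∈ Finset.range N, g ((j + 1) % (N + 1))) * g 0 := by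
      rw [Finset.prod_range_succ' (fun j => g (j % (N + 1))) N, Nat.zero_mod]
    rw [L, R]

lemma HU_prod_rot (n : ℕ) (m : ℕ) : ∀ g : ℕ → ℝ,
    ∏ j ∈ Finset.range n, g ((m + j) % n) = ∏ j ∈ Finset.range n, g (j % n) := by
  induction m with
  | zero => intro g; simp
  | succ m ih =>
    intro g
    calc ∏ j ∈ Finset.range n, g ((m + 1 + j) % n)
        = ∏ j ∈ Finset.range n, g (((m + j) % n + 1) % n) := by
          refine Finset.prod_congr rfl fun j _ => ?_
          rw [Nat.mod_add_mod]
          have e : m + 1 + j = m + j + 1 := by omega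
          rw [e]
      _ = ∏ j ∈ Finset.range n, g ((j % n + 1) % n) := ih (fun x => g ((x + 1) % n))
      _ = ∏ j ∈ Finset.range n, g ((j + 1) % n) := by
          refine Finset.prod_congr rfl fun j _ => ?_
          rw [Nat.mod_add_mod]
      _ = ∏ j ∈ Finset.range n, g (j % n) := HU_rot1 n g

lemma HU_sum_div_mod_le (ρ : ℝ) (hρ0 : 0 ≤ ρ) (hρ1 : ρ < 1) (n N : ℕ) (hn : 1 ≤ n)
    (g : ℕ → ℝ) (hg : ∀ t, 0 ≤ g t) :
    ∑ m ∈ Finset.range N, ρ ^ (m / n) * g (m % n)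
      ≤ (1 - ρ)⁻¹ * ∑ t ∈ Finset.range n, g t := by
  have hinj : ∀ x ∈ Finset.range N, ∀ y ∈ Finset.range N,
      (fun m => (m / n, m % n)) x = (fun m => (m / n, m % n)) y → x = y := by
    intro x _ y _ hxy
    simp only [Prod.mk.injEq] at hxy
    have hx := Nat.div_add_mod x n
    have hy := Nat.div_add_mod y n
    rw [hxy.1, hxy.2] at hx
    exact hx.symm.trans hy
  have h1 : ∑ m ∈ Finset.range N, ρ ^ (m / n) * g (m % n)
      = ∑ p ∈ (Finset.range N).image (fun m => (m / n, m % n)),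
          ρ ^ p.1 * g p.2 :=
    (Finset.sum_image (f := fun p : ℕ × ℕ => ρ ^ p.1 * g p.2) hinj).symm
  have h2 : (Finset.range N).image (fun m => (m / n, m % n))
      ⊆ Finset.range N ×ˢ Finset.range n := by
    intro p hp
    simp only [Finset.mem_image, Finset.mem_range] at hp
    obtain ⟨m, hm, rfl⟩ := hp
    simp only [Finset.mem_product, Finset.mem_range]
    exact ⟨lt_of_le_of_lt (Nat.div_le_self m n) hm, Nat.mod_lt _ (by omega)⟩
  have h3 : ∑ p ∈ (Finset.range N).image (fun m => (m / n, m % n)), ρ ^ p.1 * g p.2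
      ≤ ∑ p ∈ Finset.range N ×ˢ Finset.range n, ρ ^ p.1 * g p.2 :=
    Finset.sum_le_sum_of_subset_of_nonneg h2 fun p _ _ =>
      mul_nonneg (pow_nonneg hρ0 _) (hg _)
  have h4 : ∑ p ∈ Finset.range N ×ˢ Finset.range n, ρ ^ p.1 * g p.2
      = (∑ q ∈ Finset.range N, ρ ^ q) * ∑ t ∈ Finset.range n, g t := by
    rw [Finset.sum_product, Finset.sum_mul]
    exact Finset.sum_congr rfl fun q _ => by rw [Finset.mul_sum]
  have h5 : (∑ q ∈ Finset.range N, ρ ^ q) ≤ (1 - ρ)⁻¹ := by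
    have := Summable.sum_le_tsum (Finset.range N) (fun i _ => pow_nonneg hρ0 i)
      (summable_geometric_of_lt_one hρ0 hρ1)
    rwa [tsum_geometric_of_lt_one hρ0 hρ1] at this
  calc ∑ m ∈ Finset.range N, ρ ^ (m / n) * g (m % n)
      ≤ (∑ q ∈ Finset.range N, ρ ^ q) * ∑ t ∈ Finset.range n, g t := by
        rw [h1, ← h4]; exact h3
    _ ≤ (1 - ρ)⁻¹ * ∑ t ∈ Finset.range n, g t :=
        mul_le_mul_of_nonneg_right h5 (Finset.sum_nonneg fun t _ => hg t)

lemma HU_K0_nonneg (h : ℝ) (hh : 0 ≤ h) (n : ℕ) (hn : 1 ≤ n) (c : ℕ → ℝ) :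
    0 ≤ K0 h n c := by
  unfold K0
  have : Nonempty (Fin n) := ⟨⟨0, by omega⟩⟩
  refine mul_nonneg (div_nonneg (mul_nonneg hh (abs_nonneg _)) (abs_nonneg _)) ?_
  refine le_ciSup_of_le (Set.Finite.bddAbove (Set.finite_range _)) ⟨0, by omega⟩ ?_
  unfold Ssum
  positivity

/-- Factorization of the third-order operator into first-order factors. -/
lemma HU_factor (h : ℝ) (hh : h ≠ 0) (n : ℕ) (c : ℕ → ℝ) (y u v : ℕ → ℝ)
    (hu : ∀ i, u i = hDiff h y i + cyc n c i * y i)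
    (hv : ∀ j, v j = hDiff h u j - cyc n c (j + 1) * u j) (k : ℕ) :
    hDiff h (hDiff h (hDiff h y)) k
      + (-cyc n c (k + 2)) * hDiff h (hDiff h y) k
      + (hDiff h (cyc n c) (k + 1) - cyc n c (k + 1) * cyc n c (k + 2)) * hDiff h y k
      + (hDiff h (hDiff h (cyc n c)) k - cyc n c (k + 1) * hDiff h (cyc n c) (k + 1)
         - (cyc n c (k + 1) + cyc n c (k + 2)) * hDiff h (cyc n c) k
         + cyc n c k * cyc n c (k + 1) * cyc n c (k + 2)) * y k
    = hDiff h v k - cyc n c (k + 2) * v k := by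
  have e1 := hu k
  have e2 := hu (k + 1)
  have e3 := hu (k + 2)
  have f1 := hv k
  have f2 := hv (k + 1)
  simp only [hDiff] at e1 e2 e3 f1 f2 ⊢
  simp only [show k + 1 + 1 = k + 2 from rfl, show k + 2 + 1 = k + 3 from rfl,
    show k + 1 + 1 + 1 = k + 3 from rfl] at e1 e2 e3 f1 f2 ⊢
  rw [f2, f1, e3, e2, e1]
  field_simp
  ring

/-- The fundamental solution. -/
noncomputable def Efun (h : ℝ) (d : ℕ → ℝ) (k : ℕ) : ℝ :=
  ∏ i ∈ Finset.range k, (1 + h * d i)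

/-- First-order Hyers–Ulam stability with periodic coefficient: a bounded
particular solution of `Δ_h z - d z = φ` exists. -/
lemma HU_key (h : ℝ) (hh : 0 < h) (n : ℕ) (hn : 1 ≤ n) (c' : ℕ → ℝ)
    (hc' : ∀ j, j < n → 1 + h * c' j ≠ 0)
    (he1 : |eExp h n c'| ≠ 1)
    (s : ℕ) (d : ℕ → ℝ) (hd : ∀ k, d k = c' ((k + s) % n))
    (ε : ℝ) (hε : 0 ≤ ε) (φ : ℕ → ℝ) (hφ : ∀ k, |φ k| ≤ ε) :
    ∃ z : ℕ → ℝ, (∀ k, hDiff h z k - d k * z k = φ k) ∧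
      ∀ k, |z k| ≤ K0 h n c' * ε := by
  have hne : h ≠ 0 := ne_of_gt hh
  set e := eExp h n c' with he_def
  set E : ℕ → ℝ := Efun h d with hE_def
  have hfac : ∀ k, 1 + h * d k ≠ 0 := by
    intro k; rw [hd k]; exact hc' _ (Nat.mod_lt _ (by omega))
  have hE0 : ∀ k, E k ≠ 0 := fun k => Finset.prod_ne_zero_iff.2 fun i _ => hfac i
  have hEpos : ∀ k, 0 < |E k| := fun k => abs_pos.2 (hE0 k)
  have hEsucc : ∀ k, E (k + 1) = E k * (1 + h * d k) := fun k => Finset.prod_range_succ _ k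
  have hEadd : ∀ k J, E (k + J) = E k * ∏ i ∈ Finset.range J, (1 + h * d (k + i)) :=
    fun k J => Finset.prod_range_add _ k J
  have he0 : e ≠ 0 := Finset.prod_ne_zero_iff.2 fun j hj => hc' j (Finset.mem_range.1 hj)
  have heabs : 0 < |e| := abs_pos.2 he0
  have hEper : ∀ k, E (k + n) = E k * e := by
    intro k
    rw [hEadd k n]
    congr 1
    calc ∏ i ∈ Finset.range n, (1 + h * d (k + i))
        = ∏ i ∈ Finset.range n, (1 + h * c' ((k + s + i) % n)) := by
          refine Finset.prod_congr rfl fun i _ => ?_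
          rw [hd]
          have e' : k + i + s = k + s + i := by omega
          rw [e']
      _ = ∏ i ∈ Finset.range n, (1 + h * c' (i % n)) :=
          HU_prod_rot n (k + s) (fun x => 1 + h * c' x)
      _ = e := by
          refine Finset.prod_congr rfl fun i hi => ?_
          rw [Nat.mod_eq_of_lt (Finset.mem_range.1 hi)]
  have habsEadd : ∀ k J, |E (k + J)| = |E k| * ∏ i ∈ Finset.range J, |1 + h * d (k + i)| := by
    intro k J; rw [hEadd, abs_mul, Finset.abs_prod]
  have hS : ∀ k, ∑ j ∈ Finset.range n, |E k| / |E (k + (j + 1))| = Ssum h n c' (k + s) := by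
    intro k
    unfold Ssum
    refine Finset.sum_congr rfl fun j _ => ?_
    rw [habsEadd k (j + 1), div_mul_cancel_left₀ (ne_of_gt (hEpos k))]
    rw [← Finset.prod_inv_distrib]
    refine Finset.prod_congr rfl fun i _ => ?_
    rw [one_div, hd]
    have e' : k + i + s = k + s + i := by omega
    rw [e']
  have hSmod : ∀ K, Ssum h n c' K = Ssum h n c' (K % n) := by
    intro K; unfold Ssum
    refine Finset.sum_congr rfl fun j _ => Finset.prod_congr rfl fun i _ => ?_
    rw [Nat.mod_add_mod]
  have hSnonneg : ∀ K, 0 ≤ Ssum h n c' K := by intro K; unfold Ssum; positivity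
  have hSsup : ∀ K, Ssum h n c' K ≤ ⨆ k : Fin n, Ssum h n c' (k : ℕ) := by
    intro K
    rw [hSmod K]
    exact le_ciSup_of_le (Set.Finite.bddAbove (Set.finite_range _))
      ⟨K % n, Nat.mod_lt _ (by omega)⟩ le_rfl
  have hrec : ∀ z : ℕ → ℝ, (∀ k, z (k + 1) = (1 + h * d k) * z k + h * φ k) →
      ∀ k, hDiff h z k - d k * z k = φ k := by
    intro z hz k
    simp only [hDiff]
    rw [hz k]
    field_simp
    ring
  rcases lt_or_gt_of_ne he1 with hlt | hgt
  · -- |e| < 1 : backward finite sum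
    set ρ := |e| with hρ_def
    have hρ0 : 0 ≤ ρ := abs_nonneg _
    set z : ℕ → ℝ := fun k => h * ∑ j ∈ Finset.range k, (E k / E (j + 1)) * φ j with hz_def
    have hmain : ∀ D, ∀ k₀, D < k₀ →
        |E (k₀ + (n - D % n))| = ρ ^ (D / n + 1) * |E (k₀ - D)| := by
      intro D
      induction D using Nat.strong_induction_on with
      | _ D ih =>
        intro k₀ hDk
        by_cases hDn : D < n
        · rw [Nat.div_eq_of_lt hDn, Nat.mod_eq_of_lt hDn, pow_one]
          have hper := hEper (k₀ - D)
          have hidx : k₀ - D + n = k₀ + (n - D) := by omega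
          rw [hidx] at hper
          rw [hper, abs_mul]
          ring
        · push_neg at hDn
          have ih' := ih (D - n) (by omega) k₀ (by omega)
          have hper := hEper (k₀ - D)
          have hidx : k₀ - D + n = k₀ - (D - n) := by omega
          rw [hidx] at hper
          have habs : |E (k₀ - (D - n))| = |E (k₀ - D)| * ρ := by rw [hper, abs_mul]
          have hdiv : D / n = (D - n) / n + 1 := Nat.div_eq_sub_div (by omega) hDn
          have hmod : D % n = (D - n) % n := Nat.mod_eq_sub_mod hDn
          rw [hmod, ih', habs, hdiv]
          ring
    refine ⟨z, ?_, ?_⟩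
    · apply hrec
      intro k
      simp only [hz_def]
      rw [Finset.sum_range_succ]
      have hlast : E (k + 1) / E (k + 1) * φ k = φ k := by
        rw [div_self (hE0 (k + 1)), one_mul]
      have hstep : ∀ j, E (k + 1) / E (j + 1) * φ j
          = (1 + h * d k) * ((E k / E (j + 1)) * φ j) := by
        intro j
        rw [hEsucc k]
        field_simp
      rw [hlast, Finset.sum_congr rfl fun j _ => hstep j, ← Finset.mul_sum]
      ring
    · intro k
      have hg : ∀ t, 0 ≤ ρ * (|E k| / |E (k + (n - t))|) := by
        intro t; positivity
      have hterm : ∀ j, j < k → |E k / E (j + 1)|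
          = ρ ^ ((k - 1 - j) / n) * (ρ * (|E k| / |E (k + (n - (k - 1 - j) % n))|)) := by
        intro j hj
        have hDk : k - 1 - j < k := by omega
        have hj1 : j + 1 = k - (k - 1 - j) := by omega
        rw [abs_div, hj1, hmain (k - 1 - j) k hDk]
        have hρpos : 0 < ρ := heabs
        have h2 := hEpos (k - (k - 1 - j))
        rw [pow_succ]
        field_simp
      have hbdd : ∑ j ∈ Finset.range k, |E k / E (j + 1)|
          ≤ (1 - ρ)⁻¹ * (ρ * Ssum h n c' (k + s)) := by
        have hre : ∑ j ∈ Finset.range k, |E k / E (j + 1)|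
            = ∑ D ∈ Finset.range k,
                ρ ^ (D / n) * (ρ * (|E k| / |E (k + (n - D % n))|)) := by
          rw [← Finset.sum_range_reflect
            (fun D => ρ ^ (D / n) * (ρ * (|E k| / |E (k + (n - D % n))|))) k]
          exact Finset.sum_congr rfl fun j hj => hterm j (Finset.mem_range.1 hj)
        rw [hre]
        refine le_trans (HU_sum_div_mod_le ρ hρ0 hlt n k hn _ hg) ?_
        have hsg : ∑ t ∈ Finset.range n, ρ * (|E k| / |E (k + (n - t))|)
            = ρ * Ssum h n c' (k + s) := by
          rw [← Finset.sum_range_reflect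
            (fun t => ρ * (|E k| / |E (k + (n - t))|)) n]
          rw [← hS k, Finset.mul_sum]
          refine Finset.sum_congr rfl fun t ht => ?_
          have : n - (n - 1 - t) = t + 1 := by
            have := Finset.mem_range.1 ht; omega
          rw [this]
        rw [hsg]
      have hz_abs : |z k| ≤ h * ((1 - ρ)⁻¹ * (ρ * Ssum h n c' (k + s)) * ε) := by
        simp only [hz_def]
        rw [abs_mul, abs_of_pos hh]
        refine mul_le_mul_of_nonneg_left ?_ hh.le
        refine le_trans (Finset.abs_sum_le_sum_abs _ _) ?_
        calc ∑ j ∈ Finset.range k, |E k / E (j + 1) * φ j|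
            ≤ ∑ j ∈ Finset.range k, |E k / E (j + 1)| * ε := by
              refine Finset.sum_le_sum fun j _ => ?_
              rw [abs_mul]
              exact mul_le_mul_of_nonneg_left (hφ j) (abs_nonneg _)
          _ = (∑ j ∈ Finset.range k, |E k / E (j + 1)|) * ε := by
              rw [Finset.sum_mul]
          _ ≤ (1 - ρ)⁻¹ * (ρ * Ssum h n c' (k + s)) * ε :=
              mul_le_mul_of_nonneg_right hbdd hε
      refine le_trans hz_abs ?_
      unfold K0
      rw [← he_def, ← hρ_def]
      have habs1 : |1 - ρ| = 1 - ρ := abs_of_pos (by linarith)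
      rw [habs1]
      have h1ρ : 0 < 1 - ρ := by linarith
      have hrw : h * ((1 - ρ)⁻¹ * (ρ * Ssum h n c' (k + s)) * ε)
          = (h * ρ / (1 - ρ)) * Ssum h n c' (k + s) * ε := by ring
      rw [hrw]
      have hmul : 0 ≤ h * ρ / (1 - ρ) := div_nonneg (by positivity) h1ρ.le
      exact mul_le_mul_of_nonneg_right
        (mul_le_mul_of_nonneg_left (hSsup _) hmul) hε
  · -- |e| > 1 : forward infinite sum
    set ρ := |e|⁻¹ with hρ_def
    have hρ0 : 0 ≤ ρ := by positivity
    have hρ1 : ρ < 1 := by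
      rw [hρ_def]
      rw [inv_lt_one_iff₀]
      right; exact hgt
    have hPq : ∀ k J q, |E k| / |E (k + (n * q + J))| = ρ ^ q * (|E k| / |E (k + J)|) := by
      intro k J q
      induction q with
      | zero => simp
      | succ q2 ih =>
        have hidx : k + (n * (q2 + 1) + J) = (k + (n * q2 + J)) + n := by ring
        rw [hidx, hEper, abs_mul, div_mul_eq_div_div, ih, pow_succ, div_eq_mul_inv,
          ← hρ_def]
        ring
    set U : ℕ → ℕ → ℝ := fun k m => (E k / E (k + m + 1)) * φ (k + m) with hU_def
    have hUabs : ∀ k m, |U k m| ≤ ρ ^ (m / n) * ((|E k| / |E (k + (m % n + 1))|) * ε) := by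
      intro k m
      have h1 : |U k m| = (|E k| / |E (k + m + 1)|) * |φ (k + m)| := by
        simp only [hU_def]
        rw [abs_mul, abs_div]
      have hmm : n * (m / n) + (m % n + 1) = m + 1 := by
        have := Nat.div_add_mod m n
        omega
      have hidx : k + m + 1 = k + (n * (m / n) + (m % n + 1)) := by rw [hmm]; omega
      have h2 : |E k| / |E (k + m + 1)| = ρ ^ (m / n) * (|E k| / |E (k + (m % n + 1))|) := by
        rw [hidx, hPq k (m % n + 1) (m / n)]
      rw [h1, h2, mul_assoc]
      refine mul_le_mul_of_nonneg_left ?_ (pow_nonneg hρ0 _)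
      exact mul_le_mul_of_nonneg_left (hφ _) (by positivity)
    have hUsum_bdd : ∀ k N, ∑ m ∈ Finset.range N, |U k m|
        ≤ (1 - ρ)⁻¹ * (Ssum h n c' (k + s) * ε) := by
      intro k N
      calc ∑ m ∈ Finset.range N, |U k m|
          ≤ ∑ m ∈ Finset.range N, ρ ^ (m / n) * ((|E k| / |E (k + (m % n + 1))|) * ε) :=
            Finset.sum_le_sum fun m _ => hUabs k m
        _ ≤ (1 - ρ)⁻¹ * ∑ t ∈ Finset.range n, (|E k| / |E (k + (t + 1))|) * ε := by
            refine HU_sum_div_mod_le ρ hρ0 hρ1 n N hn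
              (fun t => (|E k| / |E (k + (t + 1))|) * ε) (fun t => ?_)
            positivity
        _ = (1 - ρ)⁻¹ * (Ssum h n c' (k + s) * ε) := by
            rw [← Finset.sum_mul, hS k]
    have hUsumabs : ∀ k, Summable (fun m => |U k m|) := by
      intro k
      exact summable_of_sum_range_le (fun m => abs_nonneg _) (hUsum_bdd k)
    have hUsum : ∀ k, Summable (U k) := fun k => (hUsumabs k).of_abs
    set z : ℕ → ℝ := fun k => -(h * ∑' m, U k m) with hz_def
    refine ⟨z, ?_, ?_⟩
    · apply hrec
      intro k
      have hW : (fun m => (1 + h * d k) * U k m)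
          = fun m => (E (k + 1) / E (k + m + 1)) * φ (k + m) := by
        funext m
        simp only [hU_def]
        rw [hEsucc k]
        ring
      have hWsum : Summable (fun m => (E (k + 1) / E (k + m + 1)) * φ (k + m)) := by
        rw [← hW]
        exact (hUsum k).mul_left _
      have hshift : ∀ m, (E (k + 1) / E (k + (m + 1) + 1)) * φ (k + (m + 1)) = U (k + 1) m := by
        intro m
        simp only [hU_def]
        have h1 : k + (m + 1) + 1 = k + 1 + m + 1 := by omega
        have h2 : k + (m + 1) = k + 1 + m := by omega
        rw [h1, h2]
      have hWeq : ∑' m, (E (k + 1) / E (k + m + 1)) * φ (k + m)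
          = φ k + ∑' m, U (k + 1) m := by
        rw [Summable.tsum_eq_zero_add hWsum]
        congr 1
        · simp only [Nat.add_zero]
          rw [div_self (hE0 (k + 1)), one_mul]
        · exact tsum_congr hshift
      have h1 : ∑' m, (1 + h * d k) * U k m = (1 + h * d k) * ∑' m, U k m := tsum_mul_left
      rw [hW] at h1
      have hUk1 : ∑' m, U (k + 1) m = (1 + h * d k) * ∑' m, U k m - φ k := by
        rw [← h1, hWeq]
        ring
      simp only [hz_def]
      rw [hUk1]
      ring
    · intro k
      have habs : |z k| ≤ h * ∑' m, |U k m| := by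
        simp only [hz_def]
        rw [abs_neg, abs_mul, abs_of_pos hh]
        refine mul_le_mul_of_nonneg_left ?_ hh.le
        have := norm_tsum_le_tsum_norm (f := U k) (by
          simpa only [Real.norm_eq_abs] using hUsumabs k)
        simpa only [Real.norm_eq_abs] using this
      have htsum : ∑' m, |U k m| ≤ (1 - ρ)⁻¹ * (Ssum h n c' (k + s) * ε) :=
        Summable.tsum_le_of_sum_range_le (hUsumabs k) (hUsum_bdd k)
      refine le_trans habs (le_trans (mul_le_mul_of_nonneg_left htsum hh.le) ?_)
      unfold K0
      rw [← he_def]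
      have habs1 : abs (1 - abs e) = abs e - 1 := by
        rw [abs_of_neg (by linarith)]; ring
      rw [habs1]
      have he1' : (0:ℝ) < |e| - 1 := by linarith
      have hea : |e| ≠ 0 := ne_of_gt heabs
      have hpos2 : (0:ℝ) < 1 - ρ := by linarith
      have h12 : (1:ℝ) - |e|⁻¹ ≠ 0 := by
        have h13 := hpos2
        rw [hρ_def] at h13
        exact ne_of_gt h13
      have hinv : (1 - ρ)⁻¹ = |e| / (|e| - 1) := by
        rw [hρ_def]
        field_simp
      rw [hinv]
      have hrw : h * (|e| / (|e| - 1) * (Ssum h n c' (k + s) * ε))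
          = (h * |e| / (|e| - 1)) * Ssum h n c' (k + s) * ε := by ring
      rw [hrw]
      have hmul : 0 ≤ h * |e| / (|e| - 1) := div_nonneg (by positivity) he1'.le
      exact mul_le_mul_of_nonneg_right
        (mul_le_mul_of_nonneg_left (hSsup _) hmul) hε

theorem stmt_8 (h : ℝ) (hh : 0 < h) (n : ℕ) (hn : 1 ≤ n) (c : ℕ → ℝ)
    (hc : ∀ j, j < n → c j ≠ 1 / h ∧ c j ≠ -1 / h)
    (he0 : 0 < |eExp h n c|) (he1 : |eExp h n c| ≠ 1)
    (hne0 : 0 < |eExp h n (fun j => -c j)|) (hne1 : |eExp h n (fun j => -c j)| ≠ 1)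
    (p q r : ℕ → ℝ)
    (hp : ∀ k, p k = -cyc n c (k + 2))
    (hq : ∀ k, q k = hDiff h (cyc n c) (k + 1) - cyc n c (k + 1) * cyc n c (k + 2))
    (hr : ∀ k, r k = hDiff h (hDiff h (cyc n c)) k
      - cyc n c (k + 1) * hDiff h (cyc n c) (k + 1)
      - (cyc n c (k + 1) + cyc n c (k + 2)) * hDiff h (cyc n c) k
      + cyc n c k * cyc n c (k + 1) * cyc n c (k + 2)) :
    ∀ ε : ℝ, 0 < ε → ∀ ξ : ℕ → ℝ,
      (∀ k, |hDiff h (hDiff h (hDiff h ξ)) k + p k * hDiff h (hDiff h ξ) k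
        + q k * hDiff h ξ k + r k * ξ k| ≤ ε) →
      ∃ y : ℕ → ℝ,
        (∀ k, hDiff h (hDiff h (hDiff h y)) k + p k * hDiff h (hDiff h y) k
          + q k * hDiff h y k + r k * y k = 0) ∧
        ∀ k, |ξ k - y k| ≤ (K0 h n c) ^ 2 * K0 h n (fun j => -c j) * ε := by
  intro ε hε ξ hξ
  have hne : h ≠ 0 := ne_of_gt hh
  have hcp : ∀ j, j < n → 1 + h * c j ≠ 0 := by
    intro j hj heq
    apply (hc j hj).2
    rw [eq_div_iff hne]
    linarith
  have hcm : ∀ j, j < n → 1 + h * (fun j => -c j) j ≠ 0 := by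
    intro j hj heq
    apply (hc j hj).1
    rw [eq_div_iff hne]
    simp only at heq
    linear_combination -heq
  -- the factored residual of ξ
  set u0 : ℕ → ℝ := fun i => hDiff h ξ i + cyc n c i * ξ i with hu0
  set v0 : ℕ → ℝ := fun j => hDiff h u0 j - cyc n c (j + 1) * u0 j with hv0
  set Φ : ℕ → ℝ := fun k => hDiff h v0 k - cyc n c (k + 2) * v0 k with hΦ_def
  have hΦbound : ∀ k, |Φ k| ≤ ε := by
    intro k
    have hx := hξ k
    rw [hp, hq, hr] at hx
    rwa [HU_factor h hne n c ξ u0 v0 (fun _ => rfl) (fun _ => rfl) k] at hx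
  -- step 3 : coefficient λ(k+2)
  obtain ⟨z₃, hz₃eq, hz₃b⟩ := HU_key h hh n hn c hcp he1 2
    (fun k => cyc n c (k + 2)) (fun k => rfl) ε (le_of_lt hε) Φ hΦbound
  have hK0c : 0 ≤ K0 h n c := HU_K0_nonneg h hh.le n hn c
  -- step 2 : coefficient λ(k+1)
  obtain ⟨z₂, hz₂eq, hz₂b⟩ := HU_key h hh n hn c hcp he1 1
    (fun k => cyc n c (k + 1)) (fun k => rfl) (K0 h n c * ε)
    (mul_nonneg hK0c hε.le) z₃ hz₃b
  -- step 1 : coefficient -λ(k)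
  obtain ⟨z₁, hz₁eq, hz₁b⟩ := HU_key h hh n hn (fun j => -c j) hcm hne1 0
    (fun k => -cyc n c k) (fun k => by simp [cyc]) (K0 h n c * (K0 h n c * ε))
    (mul_nonneg hK0c (mul_nonneg hK0c hε.le)) z₂ hz₂b
  set y : ℕ → ℝ := fun t => ξ t - z₁ t with hy_def
  set u1 : ℕ → ℝ := fun i => hDiff h y i + cyc n c i * y i with hu1
  set v1 : ℕ → ℝ := fun j => hDiff h u1 j - cyc n c (j + 1) * u1 j with hv1
  have hU : u1 = fun i => u0 i - z₂ i := by
    funext i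
    have h1 := hz₁eq i
    simp only [hu1, hu0, hy_def, hDiff] at h1 ⊢
    linear_combination -h1
  have hV : v1 = fun j => v0 j - z₃ j := by
    funext j
    have h2 := hz₂eq j
    simp only [hv1, hU, hv0, hDiff] at h2 ⊢
    linear_combination -h2
  refine ⟨y, ?_, ?_⟩
  · intro k
    rw [hp, hq, hr, HU_factor h hne n c y u1 v1 (fun _ => rfl) (fun _ => rfl) k]
    have h3 := hz₃eq k
    simp only [hV, hΦ_def, hv0, hu0, hDiff,
      show k + 1 + 1 = k + 2 from rfl, show k + 2 + 1 = k + 3 from rfl,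
      show k + 1 + 1 + 1 = k + 3 from rfl] at h3 ⊢
    linear_combination -h3
  · intro k
    have hb := hz₁b k
    have hval : |ξ k - y k| = |z₁ k| := by
      simp only [hy_def]
      congr 1
      ring
    rw [hval]
    refine le_trans hb (le_of_eq ?_)
    ring
end

section
/- Let h > 0 and let λ, x, η : ℕ → ℝ. Suppose Δ_h x(k) = λ(k)x(k) for all k ≥ 1, and Δ_h η(k) + λ(k)η(k) = x(k+1) for all k ∈ ℕ. Then η satisfies the discrete Hill-type equation: Δ²_h η(k) + [Δ_h λ(k) − λ(k)λ(k+1)]·η(k) = 0 for all k ∈ ℕ. -/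
theorem stmt_10 (h : ℝ) (hh : 0 < h) (lam x η : ℕ → ℝ)
    (hx : ∀ k, 1 ≤ k → hDiff h x k = lam k * x k)
    (hη : ∀ k, hDiff h η k + lam k * η k = x (k + 1)) :
    ∀ k, hDiff h (hDiff h η) k + (hDiff h lam k - lam k * lam (k + 1)) * η k = 0 := by
  intro k
  have h1 := hη k
  have h2 := hη (k + 1)
  have h3 := hx (k + 1) (by omega)
  have hne : h ≠ 0 := ne_of_gt hh
  simp only [hDiff] at *
  field_simp at *
  linear_combination (-lam (k+1) * h - 1) * h1 + h2 + h * h3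
end

section
/- Let h > 0 and let λ, x, η : ℕ → ℝ. Suppose Δ_h x(k) + λ(k)x(k) = 0 for all k ≥ 2, and Δ²_h η(k) + [Δ_h λ(k) − λ(k)λ(k+1)]·η(k) = x(k+2) for all k ∈ ℕ. Then for all k ∈ ℕ, Δ³_h η(k) + λ(k+2)·Δ²_h η(k) + [Δ_h λ(k+1) − λ(k+1)λ(k+2)]·Δ_h η(k) + [Δ²_h λ(k) − λ(k)·Δ_h λ(k+1) − λ(k)λ(k+1)λ(k+2)]·η(k) = 0. -/
theorem stmt_14 (h : ℝ) (hh : 0 < h) (lam x η : ℕ → ℝ)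
    (hx : ∀ k, 2 ≤ k → hDiff h x k + lam k * x k = 0)
    (hη : ∀ k, hDiff h (hDiff h η) k
      + (hDiff h lam k - lam k * lam (k + 1)) * η k = x (k + 2)) :
    ∀ k, hDiff h (hDiff h (hDiff h η)) k + lam (k + 2) * hDiff h (hDiff h η) k
        + (hDiff h lam (k + 1) - lam (k + 1) * lam (k + 2)) * hDiff h η k
        + (hDiff h (hDiff h lam) k - lam k * hDiff h lam (k + 1)
            - lam k * lam (k + 1) * lam (k + 2)) * η k = 0 := by
  intro k
  have A := hη k
  have B := hη (k + 1)
  have C := hx (k + 2) (by omega)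
  have hne : h ≠ 0 := ne_of_gt hh
  simp only [hDiff] at *
  have e1 : k + 1 + 1 = k + 2 := by ring
  have e2 : k + 2 + 1 = k + 3 := by ring
  have e3 : k + 1 + 1 + 1 = k + 3 := by ring
  rw [e1, e2] at *
  rw [e3] at *
  linear_combination C + (1/h) * B - (1/h) * A + lam (k+2) * A
end

section
/- Let h > 0 and A > 0 with A ≠ 1/h and A ≠ √2/h. Define S_0 := 1 + 1/(1+Ah) + 1/((1+Ah)·|1−Ah|), S_1 := 1/(1+Ah) + 2/((1+Ah)·|1−Ah|), and S_2 := 2/|1−Ah| + 1/((1+Ah)·|1−Ah|). Then max{S_0, S_1, S_2} = S_2 if A ∈ (0, 1/h) ∪ (1/h, √2/h) ∪ (√2/h, (1+√17)/(2h)), and max{S_0, S_1, S_2} = S_0 if A ≥ (1+√17)/(2h). -/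
set_option maxHeartbeats 1000000 in
theorem stmt_15 (h A : ℝ) (hh : 0 < h) (hA : 0 < A)
    (hA1 : A ≠ 1 / h) (hA2 : A ≠ Real.sqrt 2 / h)
    (S0 S1 S2 : ℝ)
    (hS0 : S0 = 1 + 1 / (1 + A * h) + 1 / ((1 + A * h) * |1 - A * h|))
    (hS1 : S1 = 1 / (1 + A * h) + 2 / ((1 + A * h) * |1 - A * h|))
    (hS2 : S2 = 2 / |1 - A * h| + 1 / ((1 + A * h) * |1 - A * h|)) :
    ((A < 1 / h ∨ (1 / h < A ∧ A < Real.sqrt 2 / h) ∨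
        (Real.sqrt 2 / h < A ∧ A < (1 + Real.sqrt 17) / (2 * h))) →
      max S0 (max S1 S2) = S2) ∧
    ((1 + Real.sqrt 17) / (2 * h) ≤ A → max S0 (max S1 S2) = S0) := by
  have hx : 0 < A * h := mul_pos hA hh
  have hu : (0:ℝ) < 1 + A * h := by linarith
  have hxne : A * h ≠ 1 := fun hc => hA1 ((eq_div_iff hh.ne').mpr hc)
  have hvne : (1:ℝ) - A * h ≠ 0 := fun hc => hxne (by linarith)
  have hv : 0 < |1 - A * h| := abs_pos.mpr hvne
  have hs17 : Real.sqrt 17 ^ 2 = 17 := Real.sq_sqrt (by norm_num)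
  have hs17nn : 0 ≤ Real.sqrt 17 := Real.sqrt_nonneg 17
  have hs17gt : 4 < Real.sqrt 17 := by nlinarith
  have hs2 : Real.sqrt 2 ^ 2 = 2 := Real.sq_sqrt (by norm_num)
  have hs2nn : 0 ≤ Real.sqrt 2 := Real.sqrt_nonneg 2
  -- S1 ≤ S2 always
  have h12 : S1 ≤ S2 := by
    rcases abs_cases (1 - A * h) with ⟨he, hsgn⟩ | ⟨he, hsgn⟩
    · have h1x : 0 < 1 - A * h := lt_of_le_of_ne hsgn (Ne.symm hvne)
      have hd : S2 - S1 = (3 * (A * h)) / ((1 + A * h) * (1 - A * h)) := by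
        rw [hS1, hS2, he]; field_simp; ring
      nlinarith [div_pos (by nlinarith : (0:ℝ) < 3 * (A * h))
        (mul_pos hu h1x), hd]
    · have h1x : 0 < A * h - 1 := by linarith
      have hd : S2 - S1 = (A * h + 2) / ((1 + A * h) * (A * h - 1)) := by
        rw [hS1, hS2, he]; field_simp; ring
      nlinarith [div_pos (by linarith : (0:ℝ) < A * h + 2)
        (mul_pos hu h1x), hd]
  constructor
  · rintro hcond
    have hxlt : A * h < (1 + Real.sqrt 17) / 2 := by
      rcases hcond with h1 | ⟨h1, h2⟩ | ⟨h1, h2⟩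
      · have : A * h < 1 := (lt_div_iff₀ hh).mp h1
        nlinarith
      · have : A * h < Real.sqrt 2 := (lt_div_iff₀ hh).mp h2
        nlinarith
      · have : A < ((1 + Real.sqrt 17) / 2) / h := by
          rw [div_div]; exact h2
        have := (lt_div_iff₀ hh).mp this
        linarith
    -- S0 ≤ S2
    have h02 : S0 ≤ S2 := by
      rcases abs_cases (1 - A * h) with ⟨he, hsgn⟩ | ⟨he, hsgn⟩
      · have h1x : 0 < 1 - A * h := lt_of_le_of_ne hsgn (Ne.symm hvne)
        have hd : S2 - S0 = ((A * h) ^ 2 + 3 * (A * h)) /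
            ((1 + A * h) * (1 - A * h)) := by
          rw [hS0, hS2, he]; field_simp; ring
        nlinarith [div_pos (by nlinarith : (0:ℝ) < (A * h) ^ 2 + 3 * (A * h))
          (mul_pos hu h1x), hd]
      · have h1x : 0 < A * h - 1 := by linarith
        have hd : S2 - S0 = (-(A * h) ^ 2 + A * h + 4) /
            ((1 + A * h) * (A * h - 1)) := by
          rw [hS0, hS2, he]; field_simp; ring
        have hnum : 0 < -(A * h) ^ 2 + A * h + 4 := by nlinarith
        nlinarith [div_pos hnum (mul_pos hu h1x), hd]
    rw [max_eq_right h12, max_eq_right h02]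
  · intro hcond
    have hxge : (1 + Real.sqrt 17) / 2 ≤ A * h := by
      have : ((1 + Real.sqrt 17) / 2) / h ≤ A := by rw [div_div]; exact hcond
      have := (div_le_iff₀ hh).mp this
      linarith
    have h1x : 0 < A * h - 1 := by nlinarith
    have he : |1 - A * h| = A * h - 1 := by
      rw [abs_of_neg (by linarith)]; ring
    have h20 : S2 ≤ S0 := by
      have hd : S0 - S2 = ((A * h) ^ 2 - A * h - 4) /
          ((1 + A * h) * (A * h - 1)) := by
        rw [hS0, hS2, he]; field_simp; ring
      have hnum : 0 ≤ (A * h) ^ 2 - A * h - 4 := by nlinarith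
      nlinarith [div_nonneg hnum (le_of_lt (mul_pos hu h1x)), hd]
    rw [max_eq_right h12, max_eq_left h20]
end

section
/- Let h > 0 and A > 0 with A ≠ 1/h. Define S_0 := 1 + 1/|1−Ah| + 1/(|1−Ah|·(1+Ah)), S_1 := 1/|1−Ah| + 2/(|1−Ah|·(1+Ah)), and S_2 := 2/(1+Ah) + 1/(|1−Ah|·(1+Ah)). Then max{S_0, S_1, S_2} = S_1 if A ∈ (0, 1/h) ∪ (1/h, √2/h), and max{S_0, S_1, S_2} = S_0 if A ≥ √2/h. -/
theorem stmt_16 (h A : ℝ) (hh : 0 < h) (hA : 0 < A) (hA1 : A ≠ 1 / h)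
    (S0 S1 S2 : ℝ)
    (hS0 : S0 = 1 + 1 / |1 - A * h| + 1 / (|1 - A * h| * (1 + A * h)))
    (hS1 : S1 = 1 / |1 - A * h| + 2 / (|1 - A * h| * (1 + A * h)))
    (hS2 : S2 = 2 / (1 + A * h) + 1 / (|1 - A * h| * (1 + A * h))) :
    ((A < 1 / h ∨ (1 / h < A ∧ A < Real.sqrt 2 / h)) →
      max S0 (max S1 S2) = S1) ∧
    (Real.sqrt 2 / h ≤ A → max S0 (max S1 S2) = S0) := by
  set x := A * h with hx
  have hx0 : 0 < x := mul_pos hA hh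
  have hxne : x ≠ 1 := by
    intro hc
    exact hA1 (by field_simp [hx] at hc ⊢; linarith)
  have h1x : 0 < 1 + x := by linarith
  have hs2 : (1:ℝ) < Real.sqrt 2 := by
    have := Real.lt_sqrt (x := 1) (y := 2) (by norm_num)
    rw [this]; norm_num
  constructor
  · rintro (hlt | ⟨hgt, hlt2⟩)
    · -- x < 1
      have hxlt : x < 1 := by
        rwa [lt_div_iff₀ hh] at hlt
      have habs : |1 - x| = 1 - x := abs_of_pos (by linarith)
      have h1 : 0 < 1 - x := by linarith
      have hprod : 0 < (1 - x) * (1 + x) := mul_pos h1 h1x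
      have hS01 : S0 ≤ S1 := by
        rw [hS0, hS1, habs]
        have : (1:ℝ) ≤ 1 / ((1 - x) * (1 + x)) := by
          apply one_le_one_div hprod
          nlinarith
        have h2 : 2 / ((1 - x) * (1 + x)) = 1 / ((1 - x) * (1 + x)) + 1 / ((1 - x) * (1 + x)) := by ring
        rw [h2]; linarith
      have hS21 : S2 ≤ S1 := by
        rw [hS2, hS1, habs]
        have hcomb : 1 / (1 - x) + 2 / ((1 - x) * (1 + x)) = (3 + x) / ((1 - x) * (1 + x)) := by
          field_simp; ring
        rw [hcomb]
        have : 2 / (1 + x) + 1 / ((1 - x) * (1 + x)) = (2 * (1 - x) + 1) / ((1 - x) * (1 + x)) := by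
          field_simp
        rw [this, div_le_div_iff₀ hprod hprod]
        nlinarith
      rw [max_eq_left hS21, max_eq_right hS01]
    · -- 1 < x < sqrt 2
      have hxgt : 1 < x := by rwa [div_lt_iff₀ hh] at hgt
      have hxlt : x < Real.sqrt 2 := by rwa [lt_div_iff₀ hh] at hlt2
      have hx2 : x ^ 2 < 2 := by
        nlinarith [Real.sq_sqrt (by norm_num : (2:ℝ) ≥ 0), hxlt, Real.sqrt_nonneg 2]
      have habs : |1 - x| = x - 1 := by rw [abs_of_neg (by linarith)]; ring
      have h1 : 0 < x - 1 := by linarith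
      have hprod : 0 < (x - 1) * (1 + x) := mul_pos h1 h1x
      have hS01 : S0 ≤ S1 := by
        rw [hS0, hS1, habs]
        have : (1:ℝ) ≤ 1 / ((x - 1) * (1 + x)) := by
          apply one_le_one_div hprod
          nlinarith
        have h2 : 2 / ((x - 1) * (1 + x)) = 1 / ((x - 1) * (1 + x)) + 1 / ((x - 1) * (1 + x)) := by ring
        rw [h2]; linarith
      have hS21 : S2 ≤ S1 := by
        rw [hS2, hS1, habs]
        have hcomb : 1 / (x - 1) + 2 / ((x - 1) * (1 + x)) = (3 + x) / ((x - 1) * (1 + x)) := by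
          field_simp; ring
        rw [hcomb]
        have : 2 / (1 + x) + 1 / ((x - 1) * (1 + x)) = (2 * (x - 1) + 1) / ((x - 1) * (1 + x)) := by
          field_simp
        rw [this, div_le_div_iff₀ hprod hprod]
        nlinarith
      rw [max_eq_left hS21, max_eq_right hS01]
  · intro hge
    have hxge : Real.sqrt 2 ≤ x := by
      rw [div_le_iff₀ hh] at hge; linarith [hge]
    have hx2 : 2 ≤ x ^ 2 := by
      nlinarith [Real.sq_sqrt (by norm_num : (2:ℝ) ≥ 0), Real.sqrt_nonneg 2]
    have hxgt : 1 < x := lt_of_lt_of_le hs2 hxge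
    have habs : |1 - x| = x - 1 := by rw [abs_of_neg (by linarith)]; ring
    have h1 : 0 < x - 1 := by linarith
    have hprod : 0 < (x - 1) * (1 + x) := mul_pos h1 h1x
    have hS10 : S1 ≤ S0 := by
      rw [hS0, hS1, habs]
      have : 1 / ((x - 1) * (1 + x)) ≤ 1 := by
        rw [div_le_one hprod]; nlinarith
      have h2 : 2 / ((x - 1) * (1 + x)) = 1 / ((x - 1) * (1 + x)) + 1 / ((x - 1) * (1 + x)) := by ring
      rw [h2]; linarith
    have hS20 : S2 ≤ S0 := by
      rw [hS2, hS0, habs]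
      have hcomb : 1 + 1 / (x - 1) + 1 / ((x - 1) * (1 + x)) = ((x - 1) * (1 + x) + (1 + x) + 1) / ((x - 1) * (1 + x)) := by
        field_simp
      rw [hcomb]
      have : 2 / (1 + x) + 1 / ((x - 1) * (1 + x)) = (2 * (x - 1) + 1) / ((x - 1) * (1 + x)) := by
        field_simp
      rw [this, div_le_div_iff₀ hprod hprod]
      have key : 0 ≤ (x ^ 2 - x + 2) * ((x - 1) * (1 + x)) :=
        mul_nonneg (by nlinarith [sq_nonneg (x - 1)]) hprod.le
      linarith [key]
    rw [max_eq_left (max_le hS10 hS20)]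
end
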